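/- For any directed graph G, every infinitely separable partition {P_1, P_2} of the vertices of G is separable on G. -/

import Mathlib

/-- Infinitary propositional formulas over signature `σ`:
atoms, conjunctions and disjunctions of (index-)sets of formulas, implication. -/
inductive Formula (σ : Type) : Type 1
  | atom : σ → Formula σ
  | conj : (ι : Type) → (ι → Formula σ) → Formula σ
  | disj : (ι : Type) → (ι → Formula σ) → Formula σ
  | imp : Formula σ → Formula σ → Formula σ

namespace Formula

variable {σ : Type}

/-- `⊥` is the empty disjunction. -/
def bot : Formula σ := Formula.disj Empty (fun e => e.elim)

/-- Binary conjunction `F ∧ G`. -/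
def and (F G : Formula σ) : Formula σ := Formula.conj Bool (fun b => if b then F else G)

/-- Binary disjunction `F ∨ G`. -/
def or (F G : Formula σ) : Formula σ := Formula.disj Bool (fun b => if b then F else G)

/-- Negation `¬F` abbreviates `F → ⊥`. -/
def neg (F : Formula σ) : Formula σ := Formula.imp F bot

/-- Conjunction of a set of atoms. -/
def conjAtoms (S : Set σ) : Formula σ := Formula.conj S (fun p => Formula.atom p.val)

/-- Satisfaction of an infinitary formula by an interpretation `I ⊆ σ`. -/
def Sat (I : Set σ) : Formula σ → Prop
  | .atom p => p ∈ I
  | .conj _ f => ∀ i, Sat I (f i)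
  | .disj _ f => ∃ i, Sat I (f i)
  | .imp F G => Sat I F → Sat I G

open Classical in
/-- The reduct `F^I`. -/
noncomputable def reduct (I : Set σ) : Formula σ → Formula σ
  | .atom p => if p ∈ I then Formula.atom p else bot
  | .conj ι f => Formula.conj ι (fun i => reduct I (f i))
  | .disj ι f => Formula.disj ι (fun i => reduct I (f i))
  | .imp F G => if Sat I (Formula.imp F G) then Formula.imp (reduct I F) (reduct I G) else bot

/-- `I` is an `A`-stable model of `F`: `I` is minimal w.r.t. `≤_A`
(`J ≤_A I` iff `J ⊆ I` and `I \ J ⊆ A`) among interpretations satisfying `F^I`. -/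
def AStable (A : Set σ) (I : Set σ) (F : Formula σ) : Prop :=
  Sat I (reduct I F) ∧ ∀ J : Set σ, J ⊆ I → I \ J ⊆ A → Sat J (reduct I F) → J = I

/-- A stable model is a `σ`-stable model. -/
def Stable (I : Set σ) (F : Formula σ) : Prop := AStable Set.univ I F

/-- The strictly positive atoms `P(F)`. -/
def spos : Formula σ → Set σ
  | .atom p => {p}
  | .conj _ f => ⋃ i, spos (f i)
  | .disj _ f => ⋃ i, spos (f i)
  | .imp _ H => spos H

/-- `F` is (syntactically) the formula `⊥`, i.e. an empty disjunction. -/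
def IsBot : Formula σ → Prop
  | .disj ι _ => IsEmpty ι
  | _ => False

open Classical in
mutual
/-- Positive nonnegated atoms `Pnn(F)`. -/
noncomputable def pnn : Formula σ → Set σ
  | .atom p => {p}
  | .conj _ f => ⋃ i, pnn (f i)
  | .disj _ f => ⋃ i, pnn (f i)
  | .imp G H => if IsBot H then ∅ else nnn G ∪ pnn H

/-- Negative nonnegated atoms `Nnn(F)`. -/
noncomputable def nnn : Formula σ → Set σ
  | .atom _ => ∅
  | .conj _ f => ⋃ i, nnn (f i)
  | .disj _ f => ⋃ i, nnn (f i)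
  | .imp G H => if IsBot H then ∅ else pnn G ∪ nnn H
end

/-- The rules of a formula, as antecedent/consequent pairs. -/
def rules : Formula σ → Set (Formula σ × Formula σ)
  | .atom _ => ∅
  | .conj _ f => ⋃ i, rules (f i)
  | .disj _ f => ⋃ i, rules (f i)
  | .imp G H => insert (G, H) (rules H)

/-- Edge relation of the positive dependency graph `DG_A[F]` (vertex set `A`). -/
noncomputable def DGEdge (F : Formula σ) (A : Set σ) (p q : σ) : Prop :=
  p ∈ A ∧ q ∈ A ∧ ∃ R ∈ rules F, p ∈ spos R.2 ∧ q ∈ pnn R.1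

/-- The atoms occurring in a formula. -/
def atoms : Formula σ → Set σ
  | .atom p => {p}
  | .conj _ f => ⋃ i, atoms (f i)
  | .disj _ f => ⋃ i, atoms (f i)
  | .imp G H => atoms G ∪ atoms H

/-- `G` is a definition for the set `Q` of atoms: a conjunction of formulas
`H ∧ C^∧ → q` with `q ∈ Q`, `C ⊆ Q`, and no atom of `Q` occurring in `H`. -/
def IsDefinition (Q : Set σ) (G : Formula σ) : Prop :=
  ∃ (ι : Type) (g : ι → Formula σ), G = Formula.conj ι g ∧
    ∀ i, ∃ (H : Formula σ) (C : Set σ) (q : σ),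
      q ∈ Q ∧ C ⊆ Q ∧ (∀ p ∈ Q, p ∉ atoms H) ∧
      g i = Formula.imp (Formula.and H (conjAtoms C)) (Formula.atom q)

end Formula

section Graph

variable {V : Type*}

/-- An infinite walk in the directed graph with edge relation `E`. -/
def IsInfWalk (E : V → V → Prop) (w : ℕ → V) : Prop := ∀ i, E (w i) (w (i + 1))

/-- The partition `{P₁, P₂}` is infinitely separable: every infinite walk
visits `P₁` or `P₂` only finitely often. -/
def InfSeparable (E : V → V → Prop) (P1 P2 : Set V) : Prop :=
  ∀ w : ℕ → V, IsInfWalk E w → {i | w i ∈ P1}.Finite ∨ {i | w i ∈ P2}.Finite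

/-- `u` and `v` are in the same strongly connected component:
each is reachable from the other. -/
def SameSCC (E : V → V → Prop) (u v : V) : Prop :=
  Relation.ReflTransGen E u v ∧ Relation.ReflTransGen E v u

/-- The partition `{P₁, P₂}` is separable: every strongly connected
component is contained in `P₁` or in `P₂`. -/
def Separable (E : V → V → Prop) (P1 P2 : Set V) : Prop :=
  ∀ u v, SameSCC E u v → ((u ∈ P1 ∧ v ∈ P1) ∨ (u ∈ P2 ∧ v ∈ P2))

end Graph

/-! If `u ∈ P₁` and `v ∈ P₂` lie in one strongly connected component, the paths `u → v` and
`v → u` join into a closed walk of positive length through both. Going round it forever is an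
infinite walk that visits `P₁` and `P₂` infinitely often. -/

section Walks

open Relation Function

variable {V : Type*} {E : V → V → Prop}

-- Prepending to an arbitrary `g` makes one lemma serve both to extract a path and to
-- concatenate two paths.
theorem Relation.ReflTransGen.exists_prepend_path {u v : V} (h : ReflTransGen E u v)
    {g : ℕ → V} {m : ℕ} (hg0 : g 0 = v) (hg : ∀ i < m, E (g i) (g (i + 1))) :
    ∃ (n : ℕ) (f : ℕ → V), f 0 = u ∧ (∀ i, f (n + i) = g i) ∧
      ∀ i < n + m, E (f i) (f (i + 1)) := by
  induction h using ReflTransGen.head_induction_on with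
  | refl => exact ⟨0, g, hg0, by simp, by simpa using hg⟩
  | @head a c hac _ ih =>
    obtain ⟨n, f, hf0, hfg, hf⟩ := ih
    refine ⟨n + 1, fun i => if i = 0 then a else f (i - 1), rfl, fun i => ?_, fun i hi => ?_⟩
    · simpa [Nat.add_right_comm] using hfg i
    · rcases i with _ | i
      · simpa [hf0] using hac
      · simpa using hf i (by omega)

theorem isInfWalk_mod {c : ℕ → V} {n : ℕ} (hn : 0 < n) (hcn : c n = c 0)
    (hc : ∀ i < n, E (c i) (c (i + 1))) : IsInfWalk E (fun i => c (i % n)) := by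
  intro i
  have hi : i % n < n := Nat.mod_lt i hn
  by_cases hlast : i % n + 1 = n
  · have hwrap : (i + 1) % n = 0 := by rw [← Nat.mod_add_mod, hlast, Nat.mod_self]
    simpa [hwrap, hlast, hcn] using hc _ hi
  · have hnext : (i + 1) % n = i % n + 1 := by
      rw [← Nat.mod_add_mod, Nat.mod_eq_of_lt (by omega)]
    simpa [hnext] using hc _ hi

theorem Function.Periodic.infinite_setOf_mem {α : Type*} {w : ℕ → α} {n k : ℕ}
    (hw : Periodic w n) (hn : 0 < n) {P : Set α} (hk : w k ∈ P) : {i | w i ∈ P}.Infinite := by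
  refine Set.infinite_of_injective_forall_mem (f := fun j => k + j * n)
    (fun a b hab => Nat.eq_of_mul_eq_mul_right hn (Nat.add_left_cancel hab)) fun j => ?_
  have hjk : w (k + j * n) = w k := by simpa using hw.nat_mul j k
  simpa [hjk] using hk

theorem SameSCC.exists_isInfWalk_infinite_visits {u v : V} (h : SameSCC E u v) (hne : u ≠ v) :
    ∃ w, IsInfWalk E w ∧ {i | w i = u}.Infinite ∧ {i | w i = v}.Infinite := by
  obtain ⟨b, g, hg0, hgu, hg⟩ :=
    h.2.exists_prepend_path (g := fun _ => u) (m := 0) rfl (by simp)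
  obtain ⟨a, c, hc0, hcg, hc⟩ := h.1.exists_prepend_path hg0 (by simpa using hg)
  have hb : 0 < b := Nat.pos_of_ne_zero fun hb => hne (by simpa [hb, hg0] using (hgu 0).symm)
  have hper : Periodic (fun i => c (i % (a + b))) (a + b) := (Nat.periodic_mod _).comp c
  refine ⟨_, isInfWalk_mod (by omega) (by simpa [hc0] using hcg b ▸ hgu 0) hc,
    hper.infinite_setOf_mem (P := {u}) (by omega) (k := 0) (by simpa using hc0),
    hper.infinite_setOf_mem (P := {v}) (by omega) (k := a) ?_⟩
  simpa [Nat.mod_eq_of_lt (by omega : a < a + b), hg0] using hcg 0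

theorem InfSeparable.not_sameSCC {P1 P2 : Set V} (h : InfSeparable E P1 P2) {u v : V}
    (hu : u ∈ P1) (hv : v ∈ P2) (hne : u ≠ v) : ¬SameSCC E u v := fun huv => by
  obtain ⟨w, hw, hwu, hwv⟩ := huv.exists_isInfWalk_infinite_visits hne
  rcases h w hw with h1 | h2
  · exact hwu (h1.subset fun i (hi : w i = u) => show w i ∈ P1 from hi ▸ hu)
  · exact hwv (h2.subset fun i (hi : w i = v) => show w i ∈ P2 from hi ▸ hv)

end Walks

/-- every infinitely separable partition of a directed graph
is separable. -/
theorem infSeparable_separable {V : Type} (E : V → V → Prop) (P1 P2 : Set V)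
    (hdisj : Disjoint P1 P2) (hcover : P1 ∪ P2 = Set.univ)
    (h : InfSeparable E P1 P2) : Separable E P1 P2 := by
  intro u v huv
  have hmem : ∀ x, x ∈ P1 ∪ P2 := fun x => hcover ▸ Set.mem_univ x
  rcases hmem u with hu | hu <;> rcases hmem v with hv | hv
  · exact Or.inl ⟨hu, hv⟩
  · exact (h.not_sameSCC hu hv (hdisj.ne_of_mem hu hv) huv).elim
  · exact (h.not_sameSCC hv hu (hdisj.ne_of_mem hv hu) ⟨huv.2, huv.1⟩).elim
  · exact Or.inr ⟨hu, hv⟩
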